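/- arXiv:1107.2802 — 6 statements merged into one kernel-verified Lean document; each statement's English description precedes it below -/
import Mathlib

section
/- Assume the TAR(1) model with zero intercepts, α = 1 and β < 1, and suppose E|Y₀|^p < ∞ and E|ε₁|^p < ∞ for some p > 0. Then there exists a constant C (depending only on p, β and r, not on n or A) such that for every n ≥ 1 and every event A: E[ |Y_n|^p · 1{Y_n ≤ r} · 1_A ] ≤ C ( sup_{k≥1} E[ |ε_k|^p · 1_A ] + E[ |Y₀|^p · 1_A ] + P(A) ). -/
open MeasureTheory ProbabilityTheory Filter
open scoped Topology NNReal ENNReal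

noncomputable section

/-- The TAR(1) model with zero intercepts:
`Y (t+1) = α * Y t + ε (t+1)` if `Y t > r`, and `Y (t+1) = β * Y t + ε (t+1)` if `Y t ≤ r`,
where `{ε t : t ≥ 1}` is an i.i.d. sequence with mean zero and variance `σ² ∈ (0, ∞)`, and the
initial value `Y 0` is independent of the innovation sequence. -/
structure IsTAR1 {Ω : Type*} [MeasurableSpace Ω] (μ : Measure Ω)
    (α β r σ : ℝ) (ε : ℕ → Ω → ℝ) (Y : ℕ → Ω → ℝ) : Prop where
  isProb : IsProbabilityMeasure μ
  meas_eps : ∀ t, Measurable (ε t)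
  meas_Y0 : Measurable (Y 0)
  ident : ∀ s t, IdentDistrib (ε s) (ε t) μ μ
  indep : iIndepFun ε μ
  indep_Y0 : IndepFun (Y 0) (fun ω t => ε t ω) μ
  integrable : Integrable (ε 1) μ
  mean_zero : ∫ ω, ε 1 ω ∂μ = 0
  sq_int : MemLp (ε 1) 2 μ
  variance_eq : variance (ε 1) μ = σ ^ 2
  sigma_pos : 0 < σ
  recursion : ∀ t ω, Y (t + 1) ω =
    (if r < Y t ω then α * Y t ω else β * Y t ω) + ε (t + 1) ω

/-!
Write `Z n = absBelow r (Y n) = |Y n| · 1{Y n ≤ r}`. A step from the unit-root regime `Y n > r`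
that lands below `r` ends within `|r| + |ε (n + 1)|` of the origin, while a step from the stable
regime multiplies by `β`; hence `Z (n + 1) ≤ β⁺ Z n + (1 + |β|) |r| + |ε (n + 1)|`. As `β⁺ < 1`,
taking `p`-th powers gives `Z (n + 1) ^ p ≤ q Z n ^ p + K (c ^ p + |ε (n + 1)| ^ p)` with `q < 1`.
Integrated over `A`, this is a linear recursion `a (n + 1) ≤ q a n + B`, whose solutions stay below
`max (a 0) (B / (1 - q))`, and `B` is a multiple of `P(A) + sup_k E[|ε k| ^ p; A]`.
-/

namespace Real

lemma max_rpow_le_add_rpow {a b : ℝ} (ha : 0 ≤ a) (hb : 0 ≤ b) (p : ℝ) :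
    max a b ^ p ≤ a ^ p + b ^ p := by
  rcases max_cases a b with ⟨h, -⟩ | ⟨h, -⟩ <;> rw [h]
  · linarith [rpow_nonneg hb p]
  · linarith [rpow_nonneg ha p]

lemma add_rpow_le_two_rpow_mul_rpow_add_rpow {a b p : ℝ} (ha : 0 ≤ a) (hb : 0 ≤ b)
    (hp : 0 ≤ p) : (a + b) ^ p ≤ 2 ^ p * (a ^ p + b ^ p) :=
  calc (a + b) ^ p ≤ (2 * max a b) ^ p := by
        rw [two_mul]; gcongr <;> simp
    _ = 2 ^ p * max a b ^ p := mul_rpow zero_le_two (le_max_of_le_left ha)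
    _ ≤ 2 ^ p * (a ^ p + b ^ p) := by gcongr; exact max_rpow_le_add_rpow ha hb p

end Real

lemma exists_rpow_mul_add_le {b p : ℝ} (hb0 : 0 ≤ b) (hb1 : b < 1) (hp : 0 < p) :
    ∃ q, 0 ≤ q ∧ q < 1 ∧ ∃ K, 0 ≤ K ∧ ∀ x y : ℝ, 0 ≤ x → 0 ≤ y →
      (b * x + y) ^ p ≤ q * x ^ p + K * y ^ p := by
  obtain ⟨θ, hθ⟩ : ∃ θ : ℝ, θ = (1 + b) / 2 := ⟨_, rfl⟩
  obtain ⟨L, hL⟩ : ∃ L : ℝ, L * (1 - b) = 1 + b :=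
    ⟨(1 + b) / (1 - b), div_mul_cancel₀ _ (by linarith)⟩
  have hθ0 : 0 ≤ θ := by rw [hθ]; positivity
  have hL0 : 0 ≤ L := by nlinarith
  refine ⟨θ ^ p, Real.rpow_nonneg hθ0 p, Real.rpow_lt_one hθ0 (by linarith) hp,
    L ^ p, Real.rpow_nonneg hL0 p, fun x y hx hy => ?_⟩
  -- `b * x + y ≤ θ * x` unless `y > (1 - b) / 2 * x`, and then `b * x + y ≤ L * y`
  have hmax : b * x + y ≤ max (θ * x) (L * y) := by
    by_contra! h
    obtain ⟨hθx, hLy⟩ := max_lt_iff.mp h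
    have h1 : (1 + b) * y < (b * x + y) * (1 - b) := by
      rw [← hL, mul_right_comm]; exact mul_lt_mul_of_pos_right hLy (by linarith)
    rw [hθ] at hθx
    nlinarith [mul_le_mul_of_nonneg_left hθx.le hb0]
  calc (b * x + y) ^ p ≤ max (θ * x) (L * y) ^ p := by gcongr
    _ ≤ (θ * x) ^ p + (L * y) ^ p := Real.max_rpow_le_add_rpow (by positivity) (by positivity) p
    _ = θ ^ p * x ^ p + L ^ p * y ^ p := by
      rw [Real.mul_rpow hθ0 hx, Real.mul_rpow hL0 hy]

lemma le_max_of_le_mul_add {a : ℕ → ℝ} {q B : ℝ} (hq0 : 0 ≤ q) (hq1 : q < 1)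
    (hrec : ∀ n, a (n + 1) ≤ q * a n + B) (n : ℕ) : a n ≤ max (a 0) (B / (1 - q)) := by
  induction n with
  | zero => exact le_max_left _ _
  | succ n ih =>
    -- `max (a 0) (B / (1 - q))` is a super-fixed point of `x ↦ q * x + B`
    have hB : B ≤ (1 - q) * max (a 0) (B / (1 - q)) := by
      rw [← div_le_iff₀' (by linarith)]; exact le_max_right _ _
    nlinarith [hrec n, mul_le_mul_of_nonneg_left ih hq0]

section LinearRecursion

variable {Ω : Type*} [MeasurableSpace Ω] {μ : Measure Ω} {f g : ℕ → Ω → ℝ} {q : ℝ}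

lemma integrable_of_le_mul_add (hf : ∀ n, AEStronglyMeasurable (f n) μ)
    (hf0 : ∀ n ω, 0 ≤ f n ω) (h0 : Integrable (f 0) μ) (hg : ∀ n, Integrable (g n) μ)
    (hrec : ∀ n ω, f (n + 1) ω ≤ q * f n ω + g n ω) (n : ℕ) : Integrable (f n) μ := by
  induction n with
  | zero => exact h0
  | succ n ih =>
    refine ((ih.const_mul q).add (hg n)).mono' (hf _) (ae_of_all _ fun ω => ?_)
    rw [Real.norm_of_nonneg (hf0 _ _)]
    exact hrec n ω

lemma integral_le_max_of_le_mul_add (hf : ∀ n, AEStronglyMeasurable (f n) μ)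
    (hf0 : ∀ n ω, 0 ≤ f n ω) (h0 : Integrable (f 0) μ) (hg : ∀ n, Integrable (g n) μ)
    (hrec : ∀ n ω, f (n + 1) ω ≤ q * f n ω + g n ω) (hq0 : 0 ≤ q) (hq1 : q < 1) {B : ℝ}
    (hB : ∀ n, ∫ ω, g n ω ∂μ ≤ B) (n : ℕ) :
    ∫ ω, f n ω ∂μ ≤ max (∫ ω, f 0 ω ∂μ) (B / (1 - q)) := by
  have hfi := integrable_of_le_mul_add hf hf0 h0 hg hrec
  refine le_max_of_le_mul_add (a := fun m => ∫ ω, f m ω ∂μ) hq0 hq1 (fun m => ?_) n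
  calc ∫ ω, f (m + 1) ω ∂μ ≤ ∫ ω, q * f m ω + g m ω ∂μ :=
        integral_mono (hfi _) (((hfi m).const_mul q).add (hg m)) (hrec m)
    _ = q * ∫ ω, f m ω ∂μ + ∫ ω, g m ω ∂μ := by
        rw [integral_add ((hfi m).const_mul q) (hg m), integral_const_mul]
    _ ≤ q * ∫ ω, f m ω ∂μ + B := by gcongr; exact hB m

end LinearRecursion

def absBelow (r y : ℝ) : ℝ := if y ≤ r then |y| else 0

lemma absBelow_nonneg (r y : ℝ) : 0 ≤ absBelow r y := by
  unfold absBelow; split_ifs <;> simp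

lemma absBelow_le_abs (r y : ℝ) : absBelow r y ≤ |y| := by
  unfold absBelow; split_ifs <;> simp

lemma absBelow_step_le (β r y e : ℝ) :
    absBelow r ((if r < y then y else β * y) + e) ≤
      max β 0 * absBelow r y + (1 + |β|) * |r| + |e| := by
  have hb := mul_nonneg (le_max_right β 0) (absBelow_nonneg r y)
  have hβr := mul_nonneg (abs_nonneg β) (abs_nonneg r)
  have hr := abs_nonneg r
  by_cases h' : (if r < y then y else β * y) + e ≤ r
  swap
  · rw [absBelow, if_neg h']; positivity
  rw [absBelow, if_pos h', abs_le]
  refine ⟨?_, by linarith [le_abs_self r, abs_nonneg e]⟩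
  have he := neg_abs_le e
  split_ifs with hy
  · linarith [neg_abs_le r]
  · -- for `β < 0`, `y ≤ r` gives `β * r ≤ β * y`
    rw [absBelow, if_pos (not_lt.mp hy)] at hb ⊢
    rcases le_or_gt 0 β with hβ | hβ
    · rw [max_eq_left hβ]; nlinarith [neg_abs_le y]
    · rw [max_eq_right hβ.le]; nlinarith [neg_abs_le (β * r), abs_mul β r]

lemma measurable_absBelow (r : ℝ) : Measurable (absBelow r) :=
  Measurable.ite measurableSet_Iic measurable_id.abs measurable_const

lemma setIntegral_inter_le_rpow_eq {Ω : Type*} [MeasurableSpace Ω] {μ : Measure Ω} {X : Ω → ℝ}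
    (hX : Measurable X) {p : ℝ} (hp : p ≠ 0) (A : Set Ω) (r : ℝ) :
    ∫ ω in A ∩ {ω | X ω ≤ r}, |X ω| ^ p ∂μ = ∫ ω in A, absBelow r (X ω) ^ p ∂μ := by
  rw [← setIntegral_indicator (measurableSet_le hX measurable_const)]
  refine integral_congr_ae (ae_of_all _ fun ω => ?_)
  simp only [Set.indicator_apply, Set.mem_ofPred_eq, absBelow]
  split_ifs <;> simp [Real.zero_rpow hp]

namespace IsTAR1

variable {Ω : Type*} [MeasurableSpace Ω] {μ : Measure Ω} {α β r σ : ℝ} {ε Y : ℕ → Ω → ℝ}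

lemma measurable_Y (h : IsTAR1 μ α β r σ ε Y) (n : ℕ) : Measurable (Y n) := by
  induction n with
  | zero => exact h.meas_Y0
  | succ n ih =>
    rw [show Y (n + 1) = _ from funext (h.recursion n)]
    exact (Measurable.ite (measurableSet_lt measurable_const ih) (ih.const_mul α)
      (ih.const_mul β)).add (h.meas_eps _)

lemma absBelow_succ_le (h : IsTAR1 μ 1 β r σ ε Y) (n : ℕ) (ω : Ω) :
    absBelow r (Y (n + 1) ω) ≤
      max β 0 * absBelow r (Y n ω) + (1 + |β|) * |r| + |ε (n + 1) ω| := by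
  simpa only [h.recursion, one_mul] using absBelow_step_le β r (Y n ω) (ε (n + 1) ω)

lemma absBelow_rpow_succ_le (h : IsTAR1 μ 1 β r σ ε Y) {p q K : ℝ} (hp : 0 ≤ p)
    (hK0 : 0 ≤ K) (hqK : ∀ x y : ℝ, 0 ≤ x → 0 ≤ y →
      (max β 0 * x + y) ^ p ≤ q * x ^ p + K * y ^ p) (n : ℕ) (ω : Ω) :
    absBelow r (Y (n + 1) ω) ^ p ≤ q * absBelow r (Y n ω) ^ p +
      K * 2 ^ p * (((1 + |β|) * |r|) ^ p + |ε (n + 1) ω| ^ p) := by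
  have hc : 0 ≤ (1 + |β|) * |r| := by positivity
  calc absBelow r (Y (n + 1) ω) ^ p
      ≤ (max β 0 * absBelow r (Y n ω) + ((1 + |β|) * |r| + |ε (n + 1) ω|)) ^ p := by
        rw [← add_assoc]; exact Real.rpow_le_rpow (absBelow_nonneg _ _) (h.absBelow_succ_le n ω) hp
    _ ≤ q * absBelow r (Y n ω) ^ p + K * ((1 + |β|) * |r| + |ε (n + 1) ω|) ^ p :=
        hqK _ _ (absBelow_nonneg _ _) (by positivity)
    _ ≤ _ := by
        rw [mul_assoc K]; gcongr
        exact Real.add_rpow_le_two_rpow_mul_rpow_add_rpow hc (abs_nonneg _) hp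

lemma integrable_abs_eps_rpow (h : IsTAR1 μ α β r σ ε Y) {p : ℝ}
    (hεp : Integrable (fun ω => |ε 1 ω| ^ p) μ) (k : ℕ) :
    Integrable (fun ω => |ε k ω| ^ p) μ :=
  ((h.ident k 1).comp (by fun_prop : Measurable fun x : ℝ => |x| ^ p)).integrable_iff.mpr hεp

lemma bddAbove_setIntegral_abs_eps_rpow (h : IsTAR1 μ α β r σ ε Y) {p : ℝ}
    (hεp : Integrable (fun ω => |ε 1 ω| ^ p) μ) (A : Set Ω) :
    BddAbove (Set.range fun k : ℕ => ∫ ω in A, |ε (k + 1) ω| ^ p ∂μ) := by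
  refine ⟨∫ ω, |ε 1 ω| ^ p ∂μ, ?_⟩
  rintro _ ⟨k, rfl⟩
  calc ∫ ω in A, |ε (k + 1) ω| ^ p ∂μ ≤ ∫ ω, |ε (k + 1) ω| ^ p ∂μ :=
        setIntegral_le_integral (h.integrable_abs_eps_rpow hεp _)
          (ae_of_all _ fun ω => by positivity)
    _ = ∫ ω, |ε 1 ω| ^ p ∂μ :=
        ((h.ident (k + 1) 1).comp (by fun_prop : Measurable fun x : ℝ => |x| ^ p)).integral_eq

lemma setIntegral_absBelow_rpow_le (h : IsTAR1 μ 1 β r σ ε Y) {p q K : ℝ} (hp : 0 < p)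
    (hq0 : 0 ≤ q) (hq1 : q < 1) (hK0 : 0 ≤ K) (hqK : ∀ x y : ℝ, 0 ≤ x → 0 ≤ y →
      (max β 0 * x + y) ^ p ≤ q * x ^ p + K * y ^ p)
    (hY0p : Integrable (fun ω => |Y 0 ω| ^ p) μ) (hεp : Integrable (fun ω => |ε 1 ω| ^ p) μ)
    (A : Set Ω) (n : ℕ) :
    ∫ ω in A, absBelow r (Y n ω) ^ p ∂μ ≤ max (∫ ω in A, |Y 0 ω| ^ p ∂μ)
      (K * 2 ^ p / (1 - q) * (((1 + |β|) * |r|) ^ p * (μ A).toReal +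
        ⨆ k : ℕ, ∫ ω in A, |ε (k + 1) ω| ^ p ∂μ)) := by
  have := h.isProb
  set c := (1 + |β|) * |r|
  have hf : ∀ n, Measurable fun ω => absBelow r (Y n ω) ^ p := fun n =>
    ((measurable_absBelow r).comp (h.measurable_Y n)).pow_const p
  have hf0 : ∀ n ω, 0 ≤ absBelow r (Y n ω) ^ p := fun n ω => by
    have := absBelow_nonneg r (Y n ω); positivity
  have hY0 : ∀ ω, absBelow r (Y 0 ω) ^ p ≤ |Y 0 ω| ^ p := fun ω =>
    Real.rpow_le_rpow (absBelow_nonneg _ _) (absBelow_le_abs _ _) hp.le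
  have hint0 : Integrable (fun ω => absBelow r (Y 0 ω) ^ p) (μ.restrict A) :=
    hY0p.restrict.mono' (hf 0).aestronglyMeasurable
      (ae_of_all _ fun ω => by rw [Real.norm_of_nonneg (hf0 0 ω)]; exact hY0 ω)
  have hg : ∀ k, Integrable (fun ω => K * 2 ^ p * (c ^ p + |ε (k + 1) ω| ^ p)) (μ.restrict A) :=
    fun k => (((integrable_const _).add (h.integrable_abs_eps_rpow hεp _)).const_mul _).restrict
  have hB : ∀ k, ∫ ω in A, K * 2 ^ p * (c ^ p + |ε (k + 1) ω| ^ p) ∂μ ≤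
      K * 2 ^ p * (c ^ p * (μ A).toReal + ⨆ k : ℕ, ∫ ω in A, |ε (k + 1) ω| ^ p ∂μ) :=
    fun k => by
      rw [integral_const_mul, integral_add (integrable_const _)
        (h.integrable_abs_eps_rpow hεp _).restrict, setIntegral_const, smul_eq_mul,
        measureReal_def, mul_comm ((μ A).toReal)]
      gcongr
      exact le_ciSup (h.bddAbove_setIntegral_abs_eps_rpow hεp A) k
  rw [div_mul_eq_mul_div]
  exact (integral_le_max_of_le_mul_add (fun n => (hf n).aestronglyMeasurable) hf0 hint0 hg
    (h.absBelow_rpow_succ_le hp.le hK0 hqK) hq0 hq1 hB n).trans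
    (max_le_max_right _ (integral_mono hint0 hY0p.restrict hY0))

end IsTAR1

/-- Lemma 3.1: if `α = 1`, `β < 1`, `E|Y₀|^p < ∞` and `E|ε₁|^p < ∞` for some `p > 0`, there
is a constant `C` (depending only on `p`, `β`, `r`) such that for every `n ≥ 1` and every
event `A`, `E[|Y_n|^p 1{Y_n ≤ r} 1_A] ≤ C (sup_k E[|ε_k|^p 1_A] + E[|Y₀|^p 1_A] + P(A))`. -/
theorem tar1_truncated_moment_bound
    {Ω : Type*} [MeasurableSpace Ω] {μ : Measure Ω} {α β r σ : ℝ} {ε Y : ℕ → Ω → ℝ}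
    (hTAR : IsTAR1 μ α β r σ ε Y)
    (hα : α = 1) (hβ : β < 1) {p : ℝ} (hp : 0 < p)
    (hY0p : Integrable (fun ω => |Y 0 ω| ^ p) μ)
    (hεp : Integrable (fun ω => |ε 1 ω| ^ p) μ) :
    ∃ C : ℝ, 0 < C ∧ ∀ n : ℕ, 1 ≤ n → ∀ A : Set Ω, MeasurableSet A →
      ∫ ω in A ∩ {ω | Y n ω ≤ r}, |Y n ω| ^ p ∂μ ≤
        C * ((⨆ k : ℕ, ∫ ω in A, |ε (k + 1) ω| ^ p ∂μ) +
          (∫ ω in A, |Y 0 ω| ^ p ∂μ) + (μ A).toReal) := by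
  subst hα
  obtain ⟨q, hq0, hq1, K, hK0, hqK⟩ :=
    exists_rpow_mul_add_le (le_max_right β 0) (max_lt hβ one_pos) hp
  set c := (1 + |β|) * |r|
  set M := K * 2 ^ p / (1 - q)
  have hM : 0 ≤ M := div_nonneg (by positivity) (by linarith)
  refine ⟨1 + M * (1 + c ^ p), by positivity, fun n _ A _ => ?_⟩
  set S := ⨆ k : ℕ, ∫ ω in A, |ε (k + 1) ω| ^ p ∂μ
  set I := ∫ ω in A, |Y 0 ω| ^ p ∂μ
  have hS : 0 ≤ S :=
    (integral_nonneg fun ω => by positivity).trans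
      (le_ciSup (hTAR.bddAbove_setIntegral_abs_eps_rpow hεp A) 0)
  have hI : 0 ≤ I := integral_nonneg fun ω => by positivity
  have hP : 0 ≤ (μ A).toReal := ENNReal.toReal_nonneg
  have hcp : 0 ≤ c ^ p := by positivity
  rw [setIntegral_inter_le_rpow_eq (hTAR.measurable_Y n) hp.ne']
  calc _ ≤ max I (M * (c ^ p * (μ A).toReal + S)) :=
        hTAR.setIntegral_absBelow_rpow_le hp hq0 hq1 hK0 hqK hY0p hεp A n
    _ ≤ I + M * (c ^ p * (μ A).toReal + S) := max_le_add_of_nonneg hI (by positivity)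
    _ ≤ (1 + M * (1 + c ^ p)) * (S + I + (μ A).toReal) := by
      nlinarith [mul_nonneg hM hI, mul_nonneg hM hP, mul_nonneg (mul_nonneg hM hcp) hS,
        mul_nonneg (mul_nonneg hM hcp) hI]

end
end

section
/- Assume the TAR(1) model with zero intercepts and that either (H1) α > 1, β ≤ 1, r = 0 and E Y₀² < ∞, or (H2) α > 1, β ≤ 1, r ≠ 0, E Y₀² < ∞ and P(ε₁ ≤ x) < 1 for every real x. Then there is a constant C such that E|Y_n| ≤ C αⁿ for all n ≥ 1, i.e., E|Y_n| = O(αⁿ). -/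
open MeasureTheory ProbabilityTheory Filter
open scoped Topology NNReal ENNReal

noncomputable section

/-! The positive and negative parts of `Y` are controlled jointly by the Lyapunov function
`V(y) = y⁺ + λ y⁻`. In one step the positive part grows at most by the factor `α`, plus
`|β| y⁻ + |ε|`, whereas the negative part grows only additively, by `(α + |β|) |r| + |ε|`: the
`α`-branch is taken only above the threshold, and `β ≤ 1`. With `|β| ≤ (α - 1) λ` this gives
`E V(Y_{t+1}) ≤ α E V(Y_t) + K`, so `E|Y_n| ≤ E V(Y_n) = O(αⁿ)`. -/

def tarMap (α β r y : ℝ) : ℝ := if r < y then α * y else β * y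

section tarMap

variable {α β r : ℝ}

lemma measurable_tarMap : Measurable (tarMap α β r) :=
  Measurable.ite measurableSet_Ioi (measurable_const_mul α) (measurable_const_mul β)

lemma abs_tarMap_le (y : ℝ) : |tarMap α β r y| ≤ max |α| |β| * |y| := by
  unfold tarMap
  split_ifs
  · rw [abs_mul]; gcongr; exact le_max_left _ _
  · rw [abs_mul]; gcongr; exact le_max_right _ _

lemma posPart_tarMap_add_le (hα : 1 ≤ α) (hβ : β ≤ 1) (y e : ℝ) :
    (tarMap α β r y + e)⁺ ≤ α * y⁺ + |β| * y⁻ + |e| := by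
  have hβy : 0 ≤ |β| * y⁻ := mul_nonneg (abs_nonneg β) (negPart_nonneg y)
  have hαy : 0 ≤ α * y⁺ := mul_nonneg (by linarith) (posPart_nonneg y)
  refine max_le ?_ (by positivity)
  have he := le_abs_self e
  unfold tarMap
  split_ifs with hy
  · nlinarith [le_posPart y]
  · rcases le_total β 0 with hβ0 | hβ0
    · rw [abs_of_nonpos hβ0] at hβy ⊢
      nlinarith [neg_le_negPart y]
    · nlinarith [le_posPart y, posPart_nonneg y]

lemma negPart_tarMap_add_le (hα : 0 ≤ α) (hβ : β ≤ 1) (y e : ℝ) :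
    (tarMap α β r y + e)⁻ ≤ y⁻ + (α + |β|) * |r| + |e| := by
  have hβr : 0 ≤ |β| * |r| := by positivity
  have hαr : 0 ≤ α * |r| := mul_nonneg hα (abs_nonneg r)
  refine max_le ?_ (by positivity)
  have he := neg_abs_le e
  unfold tarMap
  split_ifs with hy
  · nlinarith [negPart_nonneg y, mul_le_mul_of_nonneg_left hy.le hα,
      mul_le_mul_of_nonneg_left (neg_abs_le r) hα]
  · rcases le_total β 0 with hβ0 | hβ0
    · rw [abs_of_nonpos hβ0] at hβr ⊢
      nlinarith [negPart_nonneg y, mul_le_mul_of_nonpos_left (not_lt.mp hy) hβ0,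
        mul_le_mul_of_nonpos_left (le_abs_self r) hβ0]
    · nlinarith [neg_le_negPart y, negPart_nonneg y]

lemma posPart_add_mul_negPart_tarMap_add_le {l : ℝ} (hα : 1 ≤ α) (hβ : β ≤ 1)
    (hl : 0 ≤ l) (hβl : |β| ≤ (α - 1) * l) (y e : ℝ) :
    (tarMap α β r y + e)⁺ + l * (tarMap α β r y + e)⁻
      ≤ α * (y⁺ + l * y⁻) + (l * (α + |β|) * |r| + (1 + l) * |e|) := by
  have hpos := posPart_tarMap_add_le (r := r) hα hβ y e
  have hneg := mul_le_mul_of_nonneg_left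
    (negPart_tarMap_add_le (r := r) (zero_le_one.trans hα) hβ y e) hl
  nlinarith [negPart_nonneg y]

end tarMap

lemma abs_le_posPart_add_mul_negPart {l : ℝ} (hl : 1 ≤ l) (y : ℝ) : |y| ≤ y⁺ + l * y⁻ := by
  rw [← posPart_add_negPart]
  nlinarith [negPart_nonneg y]

lemma le_pow_mul_of_le_mul_add {u : ℕ → ℝ} {a K : ℝ} (ha : 1 < a) (hK : 0 ≤ K)
    (hu : ∀ n, u (n + 1) ≤ a * u n + K) (n : ℕ) :
    u n ≤ a ^ n * (u 0 + K / (a - 1)) := by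
  have hK' : 0 ≤ K / (a - 1) := div_nonneg hK (by linarith)
  suffices u n + K / (a - 1) ≤ a ^ n * (u 0 + K / (a - 1)) by linarith
  induction n with
  | zero => simp
  | succ n ih =>
    have hKa : K + K / (a - 1) = a * (K / (a - 1)) := by
      field_simp [(by linarith : a - 1 ≠ 0)]; ring
    calc u (n + 1) + K / (a - 1) ≤ a * (u n + K / (a - 1)) := by linarith [hu n]
      _ ≤ a * (a ^ n * (u 0 + K / (a - 1))) := by gcongr
      _ = a ^ (n + 1) * (u 0 + K / (a - 1)) := by ring

namespace IsTAR1

variable {Ω : Type*} [MeasurableSpace Ω] {μ : Measure Ω} {α β r σ : ℝ} {ε Y : ℕ → Ω → ℝ}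

lemma Y_succ (hTAR : IsTAR1 μ α β r σ ε Y) (t : ℕ) :
    Y (t + 1) = fun ω => tarMap α β r (Y t ω) + ε (t + 1) ω :=
  funext (hTAR.recursion t)

lemma integrable_eps (hTAR : IsTAR1 μ α β r σ ε Y) (t : ℕ) : Integrable (ε t) μ :=
  (hTAR.ident t 1).integrable_iff.mpr hTAR.integrable

lemma integral_abs_eps (hTAR : IsTAR1 μ α β r σ ε Y) (t : ℕ) :
    ∫ ω, |ε t ω| ∂μ = ∫ ω, |ε 1 ω| ∂μ :=
  ((hTAR.ident t 1).comp measurable_abs).integral_eq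

lemma integrable_Y (hTAR : IsTAR1 μ α β r σ ε Y) (hY0 : Integrable (Y 0) μ) (t : ℕ) :
    Integrable (Y t) μ := by
  induction t with
  | zero => exact hY0
  | succ t ih =>
    rw [hTAR.Y_succ]
    refine Integrable.add ?_ (hTAR.integrable_eps _)
    refine Integrable.mono' (ih.abs.const_mul (max |α| |β|))
      (measurable_tarMap.comp_aemeasurable ih.aemeasurable).aestronglyMeasurable
      (Eventually.of_forall fun ω => ?_)
    exact abs_tarMap_le _

lemma integral_lyapunov_succ_le (hTAR : IsTAR1 μ α β r σ ε Y) (hY0 : Integrable (Y 0) μ)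
    {l : ℝ} (hα : 1 ≤ α) (hβ : β ≤ 1) (hl : 0 ≤ l) (hβl : |β| ≤ (α - 1) * l) (t : ℕ) :
    ∫ ω, ((Y (t + 1) ω)⁺ + l * (Y (t + 1) ω)⁻) ∂μ
      ≤ α * ∫ ω, ((Y t ω)⁺ + l * (Y t ω)⁻) ∂μ
        + (l * (α + |β|) * |r| + (1 + l) * ∫ ω, |ε 1 ω| ∂μ) := by
  have := hTAR.isProb
  have hYt := hTAR.integrable_Y hY0 t
  have hV : Integrable (fun ω => (Y t ω)⁺ + l * (Y t ω)⁻) μ :=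
    hYt.pos_part.add (hYt.neg_part.const_mul l)
  have hE : Integrable (fun ω => l * (α + |β|) * |r| + (1 + l) * |ε (t + 1) ω|) μ :=
    (integrable_const _).add ((hTAR.integrable_eps _).abs.const_mul _)
  calc ∫ ω, ((Y (t + 1) ω)⁺ + l * (Y (t + 1) ω)⁻) ∂μ
      ≤ ∫ ω, (α * ((Y t ω)⁺ + l * (Y t ω)⁻)
          + (l * (α + |β|) * |r| + (1 + l) * |ε (t + 1) ω|)) ∂μ := by
        refine integral_mono_of_nonneg (Eventually.of_forall fun ω => ?_)
          ((hV.const_mul α).add hE) (Eventually.of_forall fun ω => ?_)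
        · exact add_nonneg (posPart_nonneg _) (mul_nonneg hl (negPart_nonneg _))
        · rw [hTAR.Y_succ]
          exact posPart_add_mul_negPart_tarMap_add_le hα hβ hl hβl _ _
    _ = _ := by
        rw [integral_add (hV.const_mul α) hE, integral_const_mul,
          integral_add (integrable_const _) ((hTAR.integrable_eps _).abs.const_mul _),
          integral_const, integral_const_mul, hTAR.integral_abs_eps]
        simp

end IsTAR1

theorem tar1_explosive_moment_growth_general
    {Ω : Type*} [MeasurableSpace Ω] {μ : Measure Ω} {α β r σ : ℝ} {ε Y : ℕ → Ω → ℝ}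
    (hTAR : IsTAR1 μ α β r σ ε Y) (hY0 : MemLp (Y 0) 2 μ)
    (hα : 1 < α) (hβ : β ≤ 1) :
    ∃ C : ℝ, 0 < C ∧ ∀ n : ℕ, 1 ≤ n → ∫ ω, |Y n ω| ∂μ ≤ C * α ^ n := by
  have := hTAR.isProb
  have hY0int := hY0.integrable one_le_two
  set l := |β| / (α - 1) + 1
  have hl : 1 ≤ l := le_add_of_nonneg_left (div_nonneg (abs_nonneg β) (by linarith))
  have hβl : |β| ≤ (α - 1) * l := by
    rw [mul_add, mul_div_cancel₀ _ (by linarith : α - 1 ≠ 0)]; linarith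
  set V : ℕ → ℝ := fun n => ∫ ω, ((Y n ω)⁺ + l * (Y n ω)⁻) ∂μ
  set K := l * (α + |β|) * |r| + (1 + l) * ∫ ω, |ε 1 ω| ∂μ
  have hK : 0 ≤ K := by
    have : 0 ≤ ∫ ω, |ε 1 ω| ∂μ := integral_nonneg fun ω => abs_nonneg _
    positivity
  have hV := le_pow_mul_of_le_mul_add (u := V) hα hK
    (hTAR.integral_lyapunov_succ_le hY0int hα.le hβ (by linarith) hβl)
  refine ⟨max 1 (V 0 + K / (α - 1)), lt_max_of_lt_left one_pos, fun n _ => ?_⟩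
  have hYn := hTAR.integrable_Y hY0int n
  calc ∫ ω, |Y n ω| ∂μ ≤ V n :=
        integral_mono hYn.abs (hYn.pos_part.add (hYn.neg_part.const_mul l))
          fun ω => abs_le_posPart_add_mul_negPart hl _
    _ ≤ α ^ n * (V 0 + K / (α - 1)) := hV n
    _ ≤ max 1 (V 0 + K / (α - 1)) * α ^ n := by
        rw [mul_comm]; gcongr; exact le_max_right _ _

/-- Part of Theorem 4.1 / Lemma 4.1(i): under (H1) or (H2), `E|Y_n| = O(αⁿ)`. -/
theorem tar1_explosive_moment_growth
    {Ω : Type*} [MeasurableSpace Ω] {μ : Measure Ω} {α β r σ : ℝ} {ε Y : ℕ → Ω → ℝ}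
    (hTAR : IsTAR1 μ α β r σ ε Y) (hY0 : MemLp (Y 0) 2 μ)
    (hα : 1 < α) (hβ : β ≤ 1)
    (hcase : r = 0 ∨ (r ≠ 0 ∧ ∀ x : ℝ, μ {ω | ε 1 ω ≤ x} < 1)) :
    ∃ C : ℝ, 0 < C ∧ ∀ n : ℕ, 1 ≤ n → ∫ ω, |Y n ω| ∂μ ≤ C * α ^ n :=
  tar1_explosive_moment_growth_general hTAR hY0 hα hβ
end
end

section
/- Assume the TAR(1) model with zero intercepts and that either (H1) α > 1, β ≤ 1, r = 0 and E Y₀² < ∞, or (H2) α > 1, β ≤ 1, r ≠ 0, E Y₀² < ∞ and P(ε₁ ≤ x) < 1 for every real x. If limsup_{n→∞} Y_n = ∞ almost surely, then Y_n/n → ∞ almost surely. -/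
open MeasureTheory ProbabilityTheory Filter
open scoped Topology NNReal ENNReal

noncomputable section

/-!
Above the threshold the recursion is linear, so as long as `Y` stays above `r`,
`Y (n + m) ≥ α ^ m * (Y n - ∑_{k < m} α⁻¹ ^ (k + 1) * |ε (n + 1 + k)|)`. Hence once `Y n` exceeds
`max r 0` plus the discounted tail `D n = ∑_k α⁻¹ ^ (k + 1) * |ε (n + 1 + k)|`, the path grows
geometrically and `Y n / n → ∞`. The `D n` have uniformly bounded means, so by Markov's
inequality `P(D n ≤ K) ≥ 1/2` for a fixed `K` and all `n`; as `D n` is independent of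
`ℱ n = σ(Y 0, ε 1, …, ε n)`, the conditional probability of escape given `ℱ n` is at least `1/2`
on `{Y n > max r 0 + K}`. This event happens infinitely often, and by Lévy's upward theorem the
conditional probabilities converge to the indicator of escape, which is therefore `1` a.s.
-/

open Finset

lemma tendsto_pow_div_natCast_atTop {a : ℝ} (ha : 1 < a) :
    Tendsto (fun n : ℕ => a ^ n / n) atTop atTop := by
  have h := tendsto_pow_const_div_const_pow_of_one_lt 1 ha
  have hpos : ∀ᶠ n : ℕ in atTop, 0 < (n : ℝ) ^ 1 / a ^ n := by
    filter_upwards [eventually_gt_atTop 0] with n hn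
    have : (0 : ℝ) < n := by exact_mod_cast hn
    positivity
  refine (tendsto_inv_nhdsGT_zero.comp (tendsto_nhdsWithin_iff.2 ⟨h, hpos⟩)).congr fun n => ?_
  simp

def discountedTail (q : ℝ) (e : ℕ → ℝ) (n : ℕ) : ℝ≥0∞ :=
  ∑' k, ENNReal.ofReal (q ^ (k + 1)) * ‖e (n + 1 + k)‖ₑ

section Escape

variable {a q r c : ℝ} {u e : ℕ → ℝ} {n : ℕ}

lemma sum_le_toReal_discountedTail (hq : 0 ≤ q) (h : discountedTail q e n ≠ ∞) (m : ℕ) :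
    ∑ k ∈ range m, q ^ (k + 1) * |e (n + 1 + k)| ≤ (discountedTail q e n).toReal := by
  rw [← ENNReal.ofReal_le_iff_le_toReal h, ENNReal.ofReal_sum_of_nonneg fun k _ => by positivity]
  refine le_trans (le_of_eq ?_) (ENNReal.sum_le_tsum (range m))
  refine Finset.sum_congr rfl fun k _ => ?_
  rw [ENNReal.ofReal_mul (by positivity), Real.enorm_eq_ofReal_abs]

lemma pow_mul_sub_toReal_discountedTail_le (ha : 1 < a)
    (hrec : ∀ t, r < u t → a * u t + e (t + 1) ≤ u (t + 1))
    (htail : discountedTail a⁻¹ e n ≠ ∞)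
    (hu : max r 0 + (discountedTail a⁻¹ e n).toReal < u n) (m : ℕ) :
    a ^ m * (u n - (discountedTail a⁻¹ e n).toReal) ≤ u (n + m) := by
  set T := (discountedTail a⁻¹ e n).toReal
  set S : ℕ → ℝ := fun m => ∑ k ∈ range m, a⁻¹ ^ (k + 1) * |e (n + 1 + k)|
  have ha0 : 0 < a := one_pos.trans ha
  have hST : ∀ m, S m ≤ T := sum_le_toReal_discountedTail (inv_nonneg.2 ha0.le) htail
  have key : ∀ m, a ^ m * (u n - S m) ≤ u (n + m) := by
    intro m
    induction m with
    | zero => simp [S]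
    | succ m ih =>
      have hr : r < u (n + m) := calc
        r < u n - S m := by linarith [le_max_left r 0, hST m]
        _ ≤ a ^ m * (u n - S m) :=
          le_mul_of_one_le_left (by linarith [le_max_right r 0, hST m]) (one_le_pow₀ ha.le)
        _ ≤ u (n + m) := ih
      have hpow : a ^ (m + 1) * a⁻¹ ^ (m + 1) = 1 := by
        rw [← mul_pow, mul_inv_cancel₀ ha0.ne', one_pow]
      calc a ^ (m + 1) * (u n - S (m + 1))
          = a * (a ^ m * (u n - S m)) - a ^ (m + 1) * a⁻¹ ^ (m + 1) * |e (n + 1 + m)| := by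
            simp only [S, sum_range_succ]; ring
        _ ≤ a * u (n + m) + e (n + m + 1) := by
            rw [hpow, one_mul, show n + 1 + m = n + m + 1 by omega]
            nlinarith [neg_abs_le (e (n + m + 1))]
        _ ≤ u (n + (m + 1)) := hrec _ hr
  calc a ^ m * (u n - T) ≤ a ^ m * (u n - S m) := by gcongr; exact hST m
    _ ≤ u (n + m) := key m

lemma tendsto_div_natCast_atTop_of_pow_mul_le (ha : 1 < a) (hc : 0 < c)
    (h : ∀ m, a ^ m * c ≤ u (n + m)) : Tendsto (fun t : ℕ => u t / t) atTop atTop := by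
  have ha0 : 0 < a := one_pos.trans ha
  refine tendsto_atTop_mono' atTop ?_
    ((tendsto_pow_div_natCast_atTop ha).const_mul_atTop (div_pos hc (pow_pos ha0 n)))
  filter_upwards [eventually_gt_atTop n] with t ht
  obtain ⟨m, rfl⟩ := Nat.exists_eq_add_of_le ht.le
  calc c / a ^ n * (a ^ (n + m) / (n + m : ℕ)) = a ^ m * c / (n + m : ℕ) := by
        rw [pow_add]; field_simp
    _ ≤ u (n + m) / (n + m : ℕ) := by gcongr; exact h m

lemma tendsto_div_natCast_atTop_of_max_add_discountedTail_lt (ha : 1 < a)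
    (hrec : ∀ t, r < u t → a * u t + e (t + 1) ≤ u (t + 1))
    (htail : discountedTail a⁻¹ e n ≠ ∞)
    (hu : max r 0 + (discountedTail a⁻¹ e n).toReal < u n) :
    Tendsto (fun t : ℕ => u t / t) atTop atTop :=
  tendsto_div_natCast_atTop_of_pow_mul_le ha (by linarith [le_max_right r 0])
    (pow_mul_sub_toReal_discountedTail_le ha hrec htail hu)

end Escape

section

variable {Ω : Type*} {m0 : MeasurableSpace Ω} {μ : Measure Ω}

lemma iIndepFun_update_of_indepFun {ι β : Type*} [DecidableEq ι] [MeasurableSpace β]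
    {f : ι → Ω → β} {X : Ω → β} (j : ι) (hf : iIndepFun f μ)
    (hX : IndepFun X (fun ω i => f i ω) μ) : iIndepFun (Function.update f j X) μ := by
  rw [iIndepFun_iff_measure_inter_preimage_eq_mul] at hf ⊢
  intro S sets hsets
  by_cases hj : j ∈ S
  swap
  · have hS : ∀ i ∈ S, Function.update f j X i = f i := fun i hi =>
      Function.update_of_ne (ne_of_mem_of_not_mem hi hj) _ _
    rw [Set.iInter₂_congr fun i hi => by rw [hS i hi], prod_congr rfl fun i hi => by rw [hS i hi]]
    exact hf S hsets
  have hrest : ∀ i ∈ S.erase j, Function.update f j X i = f i := fun i hi =>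
    Function.update_of_ne (ne_of_mem_erase hi) _ _
  have hpi : ⋂ i ∈ S.erase j, f i ⁻¹' sets i =
      (fun ω i => f i ω) ⁻¹' (↑(S.erase j) : Set ι).pi sets := by
    ext ω; simp only [Set.mem_iInter, Set.mem_preimage, Set.mem_pi,
      Finset.mem_coe, Finset.mem_erase, ne_eq, and_imp]
  have hmeas : MeasurableSet ((↑(S.erase j) : Set ι).pi sets) :=
    .pi (S.erase j).countable_toSet fun i hi => hsets i (mem_of_mem_erase hi)
  rw [← insert_erase hj, set_biInter_insert, prod_insert (notMem_erase j S),
    Set.iInter₂_congr fun i hi => by rw [hrest i hi], prod_congr rfl fun i hi => by rw [hrest i hi],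
    Function.update_self, ← hf _ fun i hi => hsets i (mem_of_mem_erase hi), hpi,
    indepFun_iff_measure_inter_preimage_eq_mul.1 hX _ _ (hsets j hj) hmeas]

lemma ae_mem_of_frequently_le_condExp_indicator [IsFiniteMeasure μ] {ℱ : Filtration ℕ m0}
    {A : Set Ω} (hA : MeasurableSet[⨆ n, ℱ n] A) {B : ℕ → Set Ω} {δ : ℝ} (hδ : 0 < δ)
    (hB : ∀ n, ∀ᵐ ω ∂μ, ω ∈ B n → δ ≤ μ[A.indicator 1 | ℱ n] ω)
    (hfreq : ∀ᵐ ω ∂μ, ∃ᶠ n in atTop, ω ∈ B n) : ∀ᵐ ω ∂μ, ω ∈ A := by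
  have hlevy := ((integrable_const (1 : ℝ) (μ := μ)).indicator
    (iSup_le ℱ.le _ hA)).tendsto_ae_condExp (ℱ := ℱ) (stronglyMeasurable_const.indicator hA)
  filter_upwards [hlevy, hfreq, ae_all_iff.2 hB] with ω hlim hω hδB
  by_contra hωA
  rw [Set.indicator_of_notMem hωA] at hlim
  obtain ⟨n, hn, hsmall⟩ := (hω.and_eventually (hlim.eventually (gt_mem_nhds hδ))).exists
  exact (hδB n hn).not_gt hsmall

lemma measureReal_le_condExp_indicator_of_indep [IsFiniteMeasure μ] {m₁ m₂ : MeasurableSpace Ω}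
    (hle₁ : m₁ ≤ m0) (hle₂ : m₂ ≤ m0) (hind : Indep m₁ m₂ μ) {A B C : Set Ω}
    (hA : MeasurableSet[m0] A) (hB : MeasurableSet[m₁] B) (hC : MeasurableSet[m₂] C)
    (hBC : B ∩ C ⊆ A) : ∀ᵐ ω ∂μ, ω ∈ B → μ.real C ≤ μ[A.indicator 1 | m₁] ω := by
  have hCint : Integrable (C.indicator (1 : Ω → ℝ)) μ := (integrable_const 1).indicator (hle₂ _ hC)
  have hmono := condExp_mono (m := m₁) (hCint.indicator (hle₁ _ hB))
    ((integrable_const 1).indicator hA : Integrable (A.indicator 1) μ) (.of_forall fun ω => by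
      rw [Set.indicator_indicator]
      exact Set.indicator_le_indicator_of_subset (f := (1 : Ω → ℝ)) hBC (fun _ => zero_le_one) ω)
  have hpull := condExp_indicator (m := m₁) hCint hB
  have hconst := condExp_indep_eq (f := C.indicator (1 : Ω → ℝ)) hle₂ hle₁
    (stronglyMeasurable_one.indicator hC) hind.symm
  filter_upwards [hmono, hpull, hconst] with ω hω hpullω hconstω hωB
  rw [← integral_indicator_one (hle₂ _ hC), ← hconstω, ← Set.indicator_of_mem hωB (μ[_ | m₁]),
    ← hpullω]
  exact hω

lemma exists_forall_half_le_measureReal_setOf_le [IsProbabilityMeasure μ] {ι : Type*}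
    {X : ι → Ω → ℝ≥0∞} {c : ℝ≥0∞} (hc : c ≠ ∞) (hX : ∀ i, Measurable (X i))
    (hint : ∀ i, ∫⁻ ω, X i ω ∂μ ≤ c) : ∃ K : ℝ≥0, ∀ i, 2⁻¹ ≤ μ.real {ω | X i ω ≤ K} := by
  lift c to ℝ≥0 using hc
  refine ⟨2 * c + 1, fun i => ?_⟩
  have hmarkov : μ {ω | ↑(2 * c + 1) ≤ X i ω} ≤ 2⁻¹ := calc
    _ ≤ (∫⁻ ω, X i ω ∂μ) / ↑(2 * c + 1) :=
      meas_ge_le_lintegral_div (hX i).aemeasurable (by simp) ENNReal.coe_ne_top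
    _ ≤ c / ↑(2 * c + 1) := by gcongr; exact hint i
    _ ≤ 2⁻¹ := by
      rw [ENNReal.div_le_iff (by simp) ENNReal.coe_ne_top, ← ENNReal.coe_ofNat,
        ← ENNReal.coe_inv two_ne_zero, ← ENNReal.coe_mul, ENNReal.coe_le_coe, ← NNReal.coe_le_coe]
      push_cast
      linarith
  have hmarkov_real : μ.real {ω | ↑(2 * c + 1) ≤ X i ω} ≤ 2⁻¹ := by
    simpa [measureReal_def] using ENNReal.toReal_mono (by simp) hmarkov
  calc (2 : ℝ)⁻¹ ≤ 1 - μ.real {ω | ↑(2 * c + 1) ≤ X i ω} := by linarith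
    _ = μ.real {ω | ↑(2 * c + 1) ≤ X i ω}ᶜ :=
      (probReal_compl_eq_one_sub (measurableSet_le measurable_const (hX i))).symm
    _ ≤ μ.real {ω | X i ω ≤ ↑(2 * c + 1)} := by
      rw [Set.compl_ofPred]
      exact measureReal_mono fun ω hω => le_of_not_ge hω

end

lemma lintegral_discountedTail {Ω : Type*} [MeasurableSpace Ω] {μ : Measure Ω}
    {ε : ℕ → Ω → ℝ} {Z : Ω → ℝ} (hident : ∀ t, IdentDistrib (ε t) Z μ μ) (q : ℝ) (n : ℕ) :
    ∫⁻ ω, discountedTail q (fun t => ε t ω) n ∂μ =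
      (∑' k, ENNReal.ofReal (q ^ (k + 1))) * ∫⁻ ω, ‖Z ω‖ₑ ∂μ := by
  have hterm : ∀ k, AEMeasurable (fun ω => ‖ε (n + 1 + k) ω‖ₑ) μ :=
    fun k => (hident _).aemeasurable_fst.enorm
  simp only [discountedTail]
  rw [lintegral_tsum fun k => (hterm k).const_mul _, ← ENNReal.tsum_mul_right]
  refine tsum_congr fun k => ?_
  rw [lintegral_const_mul' _ _ ENNReal.ofReal_ne_top]
  exact congrArg _ ((hident _).comp measurable_enorm).lintegral_eq

lemma tsum_ofReal_pow_succ_ne_top {q : ℝ} (hq₀ : 0 ≤ q) (hq₁ : q < 1) :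
    ∑' k, ENNReal.ofReal (q ^ (k + 1)) ≠ ∞ := by
  rw [← ENNReal.ofReal_tsum_of_nonneg (fun k => by positivity)
    ((summable_nat_add_iff 1).2 (summable_geometric_of_lt_one hq₀ hq₁))]
  exact ENNReal.ofReal_ne_top

lemma measurable_discountedTail {Ω : Type*} {ε : ℕ → Ω → ℝ} (q : ℝ) (n : ℕ) :
    Measurable[⨆ i ∈ Set.Ioi n, MeasurableSpace.comap (ε i) inferInstance]
      fun ω => discountedTail q (fun t => ε t ω) n := by
  let : MeasurableSpace Ω := ⨆ i ∈ Set.Ioi n, MeasurableSpace.comap (ε i) inferInstance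
  exact Measurable.tsum fun k => measurable_const.mul <| Measurable.enorm <|
    (comap_measurable (ε (n + 1 + k))).mono
      (le_iSup₂ (f := fun i (_ : i ∈ Set.Ioi n) => MeasurableSpace.comap (ε i) inferInstance)
        (n + 1 + k) (by simp only [Set.mem_Ioi]; omega)) le_rfl

namespace IsTAR1

variable {Ω : Type*} [MeasurableSpace Ω] {μ : Measure Ω} {α β r σ : ℝ} {ε Y : ℕ → Ω → ℝ}

lemma stronglyMeasurable_update (h : IsTAR1 μ α β r σ ε Y) (i : ℕ) :
    StronglyMeasurable (Function.update ε 0 (Y 0) i) := by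
  rcases eq_or_ne i 0 with rfl | hi
  · simpa using h.meas_Y0.stronglyMeasurable
  · simpa [hi] using (h.meas_eps i).stronglyMeasurable

/-- `ε 0` plays no role in the model; replacing it by `Y 0` makes this the natural filtration of
`Y 0, ε 1, ε 2, …`. -/
def filtration (h : IsTAR1 μ α β r σ ε Y) : Filtration ℕ ‹MeasurableSpace Ω› :=
  Filtration.natural (Function.update ε 0 (Y 0)) h.stronglyMeasurable_update

lemma measurable_update_filtration (h : IsTAR1 μ α β r σ ε Y) {i n : ℕ} (hin : i ≤ n) :
    Measurable[h.filtration n] (Function.update ε 0 (Y 0) i) :=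
  (comap_measurable _).mono (le_iSup₂ (f := fun j (_ : j ≤ n) =>
    MeasurableSpace.comap (Function.update ε 0 (Y 0) j) inferInstance) i hin) le_rfl

lemma measurable_filtration (h : IsTAR1 μ α β r σ ε Y) {t n : ℕ} (htn : t ≤ n) :
    Measurable[h.filtration n] (Y t) := by
  induction t with
  | zero => simpa using h.measurable_update_filtration htn
  | succ t ih =>
    have hYt := ih (by omega)
    have hε : Measurable[h.filtration n] (ε (t + 1)) := by
      simpa using h.measurable_update_filtration htn
    rw [show Y (t + 1) = _ from funext (h.recursion t)]
    exact (Measurable.ite (measurableSet_lt measurable_const hYt) (hYt.const_mul α)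
      (hYt.const_mul β)).add hε

lemma indep_filtration (h : IsTAR1 μ α β r σ ε Y) (n : ℕ) :
    Indep (h.filtration n) (⨆ i ∈ Set.Ioi n, MeasurableSpace.comap (ε i) inferInstance) μ := by
  have hind := iIndepFun_update_of_indepFun 0 h.indep h.indep_Y0
  have := indep_iSup_of_disjoint (fun i => (h.stronglyMeasurable_update i).measurable.comap_le)
    ((iIndepFun_iff_iIndep _ _ _).1 hind) (Set.Iic_disjoint_Ioi (le_refl n))
  have htail : ⨆ i ∈ Set.Ioi n, MeasurableSpace.comap (Function.update ε 0 (Y 0) i) inferInstance =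
      ⨆ i ∈ Set.Ioi n, MeasurableSpace.comap (ε i) inferInstance :=
    iSup_congr fun i => iSup_congr fun hi => by
      rw [Function.update_of_ne (n.zero_le.trans_lt hi).ne']
  rwa [htail] at this

lemma tendsto_div_natCast_atTop_of_lt (h : IsTAR1 μ α β r σ ε Y) (hα : 1 < α) {ω : Ω} {n : ℕ}
    {K : ℝ≥0} (hY : max r 0 + K < Y n ω) (htail : discountedTail α⁻¹ (fun t => ε t ω) n ≤ K) :
    Tendsto (fun t : ℕ => Y t ω / t) atTop atTop :=
  tendsto_div_natCast_atTop_of_max_add_discountedTail_lt hα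
    (fun t ht => (by rw [h.recursion, if_pos ht] : Y (t + 1) ω = _).ge)
    (ne_top_of_le_ne_top ENNReal.coe_ne_top htail)
    (by linarith [ENNReal.toReal_le_coe_of_le_coe htail])

end IsTAR1

theorem tar1_explosive_superlinear_general
    {Ω : Type*} [MeasurableSpace Ω] {μ : Measure Ω} {α β r σ : ℝ} {ε Y : ℕ → Ω → ℝ}
    (hTAR : IsTAR1 μ α β r σ ε Y)
    (hα : 1 < α)
    (hlimsup : ∀ᵐ ω ∂μ, ∀ M : ℝ, ∃ᶠ n in atTop, M < Y n ω) :
    ∀ᵐ ω ∂μ, Tendsto (fun n => Y n ω / n) atTop atTop := by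
  have := hTAR.isProb
  set ℱ := hTAR.filtration
  set G : ℕ → MeasurableSpace Ω :=
    fun n => ⨆ i ∈ Set.Ioi n, MeasurableSpace.comap (ε i) inferInstance
  have hG : ∀ n, G n ≤ ‹_› := fun n => iSup₂_le fun i _ => (hTAR.meas_eps i).comap_le
  obtain ⟨K, hK⟩ := exists_forall_half_le_measureReal_setOf_le
    (ENNReal.mul_ne_top (tsum_ofReal_pow_succ_ne_top (inv_nonneg.2 (by linarith))
      (inv_lt_one_of_one_lt₀ hα)) hTAR.integrable.2.ne)
    (fun n => (measurable_discountedTail α⁻¹ n).mono (hG n) le_rfl)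
    (fun n => (lintegral_discountedTail (fun t => hTAR.ident t 1) α⁻¹ n).le)
  have hA : MeasurableSet[⨆ n, ℱ n] {ω | Tendsto (fun n => Y n ω / n) atTop atTop} :=
    measurableSet_tendsto _ fun n =>
      ((hTAR.measurable_filtration le_rfl).mono (le_iSup ℱ n) le_rfl).div_const _
  refine ae_mem_of_frequently_le_condExp_indicator hA (B := fun n => {ω | max r 0 + K < Y n ω})
    (by norm_num : (0 : ℝ) < 2⁻¹) (fun n => ?_) (by filter_upwards [hlimsup] with ω hω using hω _)
  refine (measureReal_le_condExp_indicator_of_indep (ℱ.le n) (hG n) (hTAR.indep_filtration n)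
    (iSup_le ℱ.le _ hA) (measurableSet_lt measurable_const (hTAR.measurable_filtration le_rfl))
    (measurableSet_le (measurable_discountedTail α⁻¹ n) measurable_const) ?_).mono
    fun ω hω hB => (hK n).trans (hω hB)
  rintro ω ⟨hY, htail⟩
  exact hTAR.tendsto_div_natCast_atTop_of_lt hα hY htail

/-- Lemma 4.1(ii): under (H1) or (H2), if `limsup Y_n = ∞` a.s. then `Y_n / n → ∞` a.s. -/
theorem tar1_explosive_superlinear
    {Ω : Type*} [MeasurableSpace Ω] {μ : Measure Ω} {α β r σ : ℝ} {ε Y : ℕ → Ω → ℝ}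
    (hTAR : IsTAR1 μ α β r σ ε Y) (hY0 : MemLp (Y 0) 2 μ)
    (hα : 1 < α) (hβ : β ≤ 1)
    (hcase : r = 0 ∨ (r ≠ 0 ∧ ∀ x : ℝ, μ {ω | ε 1 ω ≤ x} < 1))
    (hlimsup : ∀ᵐ ω ∂μ, ∀ M : ℝ, ∃ᶠ n in atTop, M < Y n ω) :
    ∀ᵐ ω ∂μ, Tendsto (fun n => Y n ω / n) atTop atTop :=
  tar1_explosive_superlinear_general hTAR hα hlimsup
end
end

section
/- Let {ε_j : j ≥ 1} be i.i.d. real random variables with E|ε₁| < ∞ and P(ε₁ ≤ x) < 1 for every real x, and let 0 < β < 1. Then the series Σ_{j=1}^∞ β^{j−1} ε_j converges almost surely and for every real x one has P( Σ_{j=1}^∞ β^{j−1} ε_j ≤ x ) < 1. -/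
/-!
Almost sure convergence: `∑ β ^ j * E|ε_{j+1}| = E|ε₁| / (1 - β) < ∞`.

For the law, split the series as `ε₁ + β T` with `T = ∑ β ^ j ε_{j+2}`, which is independent of
`ε₁`. Some `n` has `P(T ≥ -n) > 0`, and `P(ε₁ > x + β n) > 0` by hypothesis; by independence both
events happen together with positive probability, and on their intersection the series exceeds `x`.
-/

open MeasureTheory ProbabilityTheory
open scoped ENNReal

lemma tsum_pow_mul_eq_add_mul_tsum {β : ℝ} {a : ℕ → ℝ} (h : Summable fun j => β ^ j * a j) :
    ∑' j, β ^ j * a j = a 0 + β * ∑' j, β ^ j * a (j + 1) := by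
  rw [h.tsum_eq_zero_add, ← tsum_mul_left]
  simp [pow_succ', mul_assoc]

namespace ProbabilityTheory

variable {Ω ι κ γ : Type*} [MeasurableSpace Ω] {μ : Measure Ω}

lemma ae_summable_mul_of_identDistrib {X : ℕ → Ω → ℝ} (hident : ∀ j, IdentDistrib (X j) (X 0) μ μ)
    (hint : Integrable (X 0) μ) {c : ℕ → ℝ} (hc : Summable fun j => ‖c j‖) :
    ∀ᵐ ω ∂μ, Summable fun j => c j * X j ω := by
  have hnorm : ∑' j, eLpNorm (c j • X j) 1 μ ≠ ∞ := by
    simp only [eLpNorm_const_smul, (hident _).eLpNorm_eq, ENNReal.tsum_mul_right]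
    exact ENNReal.mul_ne_top (tsum_enorm_ne_top_iff_summable_norm.2 hc)
      (memLp_one_iff_integrable.2 hint).eLpNorm_ne_top
  filter_upwards [summable_norm_of_tsum_eLpNorm_ne_top le_rfl
    (fun j => ((hident j).aestronglyMeasurable_fst).const_smul (c j)) hnorm] with ω hω
  exact hω.of_norm

lemma iIndepFun.indepFun_of_notMem_range [MeasurableSpace γ] {f : ι → Ω → γ}
    (hf : iIndepFun f μ) (hmeas : ∀ i, Measurable (f i)) {g : κ → ι} {i : ι}
    (hi : i ∉ Set.range g) :
    IndepFun (f i) (fun ω k => f (g k) ω) μ := by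
  have hsup := indep_iSup_of_disjoint (fun j => (hmeas j).comap_le)
    ((iIndepFun_iff_iIndep _ _ _).1 hf) (Set.disjoint_singleton_left.2 hi)
  rw [IndepFun_iff_Indep]
  refine indep_of_indep_of_le hsup (by simp) ?_
  simp_rw [MeasurableSpace.pi, MeasurableSpace.comap_iSup, MeasurableSpace.comap_comp,
    Function.comp_def, iSup_le_iff]
  exact fun k =>
    le_iSup₂ (f := fun j (_ : j ∈ Set.range g) => MeasurableSpace.comap (f j) _) (g k) ⟨k, rfl⟩

lemma measure_add_mul_le_lt_one [IsProbabilityMeasure μ] {X Y : Ω → ℝ} (hX : Measurable X)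
    (hY : Measurable Y) (hXY : IndepFun X Y μ) (hX_law : ∀ x, μ {ω | X ω ≤ x} < 1) {c : ℝ}
    (hc : 0 ≤ c) (x : ℝ) :
    μ {ω | X ω + c * Y ω ≤ x} < 1 := by
  obtain ⟨n, hn⟩ : ∃ n : ℕ, μ (Y ⁻¹' Set.Ici (-n)) ≠ 0 := by
    by_contra! h
    have hcover : (⋃ n : ℕ, Y ⁻¹' Set.Ici (-n)) = Set.univ :=
      Set.eq_univ_of_forall fun ω => Set.mem_iUnion.2
        ((exists_nat_ge (-Y ω)).imp fun n hn => by simp; linarith)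
    exact IsProbabilityMeasure.ne_zero μ (by simpa [hcover] using measure_iUnion_null h)
  set A := X ⁻¹' Set.Ioi (x + c * n)
  set B := Y ⁻¹' Set.Ici (-n)
  have hA : μ A ≠ 0 := by
    have hA_eq : A = {ω | X ω ≤ x + c * n}ᶜ := by ext; simp [A]
    rw [hA_eq, prob_compl_eq_one_sub (measurableSet_le hX measurable_const)]
    exact (tsub_pos_of_lt (hX_law _)).ne'
  have hAB : μ (A ∩ B) ≠ 0 := by
    rw [hXY.measure_inter_preimage_eq_mul _ _ measurableSet_Ioi measurableSet_Ici]
    exact mul_ne_zero hA hn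
  have hsub : {ω | X ω + c * Y ω ≤ x} ⊆ (A ∩ B)ᶜ := by
    rintro ω hω ⟨hAω, hBω⟩
    simp only [Set.mem_ofPred_eq, Set.mem_preimage, Set.mem_Ioi, Set.mem_Ici, A, B] at hω hAω hBω
    nlinarith
  calc μ {ω | X ω + c * Y ω ≤ x} ≤ μ (A ∩ B)ᶜ := measure_mono hsub
    _ < 1 := by
      rw [prob_compl_eq_one_sub ((hX measurableSet_Ioi).inter (hY measurableSet_Ici))]
      exact ENNReal.sub_lt_self ENNReal.one_ne_top one_ne_zero hAB

end ProbabilityTheory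

/-- If `{ε_j : j ≥ 1}` are i.i.d., integrable, with `P(ε₁ ≤ x) < 1` for every `x`, and
`0 < β < 1`, then `Σ_{j≥1} β^{j-1} ε_j` converges a.s. and its law puts no mass one on any
left half-line: `P(Σ_{j≥1} β^{j-1} ε_j ≤ x) < 1` for every `x`. -/
theorem geometric_series_tail_unbounded
    {Ω : Type*} [MeasurableSpace Ω] {μ : Measure Ω} [IsProbabilityMeasure μ]
    {ε : ℕ → Ω → ℝ}
    (hmeas : ∀ i, Measurable (ε i))
    (hident : ∀ i j, IdentDistrib (ε i) (ε j) μ μ)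
    (hindep : iIndepFun ε μ)
    (hint : Integrable (ε 1) μ)
    (hlaw : ∀ x : ℝ, μ {ω | ε 1 ω ≤ x} < 1)
    {β : ℝ} (hβ0 : 0 < β) (hβ1 : β < 1) :
    (∀ᵐ ω ∂μ, Summable fun j : ℕ => β ^ j * ε (j + 1) ω) ∧
    ∀ x : ℝ, μ {ω | (∑' j : ℕ, β ^ j * ε (j + 1) ω) ≤ x} < 1 := by
  have hsum : ∀ᵐ ω ∂μ, Summable fun j : ℕ => β ^ j * ε (j + 1) ω :=
    ae_summable_mul_of_identDistrib (X := fun j => ε (j + 1)) (fun j => hident _ _) hint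
      (by simpa [abs_of_pos hβ0] using summable_geometric_of_lt_one hβ0.le hβ1)
  refine ⟨hsum, fun x => ?_⟩
  let T : Ω → ℝ := fun ω => ∑' j : ℕ, β ^ j * ε (j + 2) ω
  have hT : Measurable T := Measurable.tsum fun j => (hmeas _).const_mul _
  have hindepT : IndepFun (ε 1) T μ :=
    (hindep.indepFun_of_notMem_range hmeas (g := (· + 2)) (by simp)).comp measurable_id
      (Measurable.tsum fun j => (measurable_pi_apply j).const_mul _)
  have hsplit : (fun ω => ∑' j : ℕ, β ^ j * ε (j + 1) ω) =ᵐ[μ] fun ω => ε 1 ω + β * T ω :=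
    hsum.mono fun ω h => tsum_pow_mul_eq_add_mul_tsum h
  exact (measure_congr (hsplit.preimage (Set.Iic x))).trans_lt
    (measure_add_mul_le_lt_one (hmeas 1) hT hindepT hlaw hβ0.le x)
end

section
/- Assume the TAR(1) model with common intercept γ: Y_t = γ + α Y_{t−1} + ε_t if Y_{t−1} > r and Y_t = γ + β Y_{t−1} + ε_t if Y_{t−1} ≤ r, with α = 1, β < 1, r ≤ 0 and γ > 0, where E ε₁ = 0, Var ε₁ = σ² ∈ (0,∞). Then Y_n ≥ nγ + Σ_{k=1}^n ε_k + Y₀ for all n ≥ 1; consequently Y_n → ∞ almost surely, and sup_{n≥1} | Y_n − nγ − Σ_{i=1}^n ε_i | < ∞ almost surely (i.e., max_{1≤k≤n} |Y_k − kγ − Σ_{i=1}^k ε_i| = O(1) a.s.). -/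
/-
Write `D n = Y n - nγ - ∑_{k ≤ n} ε k` for the deviation of the path from the random walk with
drift `γ`. Its increment `D (n+1) - D n` is `0` when `Y n > r` and `(β - 1) Y n ≥ 0` otherwise
(as `Y n ≤ r ≤ 0`), so `D` is nondecreasing and `D n ≥ D 0 = Y 0`. Hence
`Y n ≥ nγ + ∑ ε k + Y 0`, which tends to `∞` by the strong law of large numbers. Once
`Y n > r` for good, the increments of `D` vanish, so `D` is eventually constant and thus bounded.
-/

open MeasureTheory ProbabilityTheory Filter
open scoped Topology NNReal ENNReal

noncomputable section

/-- The TAR(1) model with common intercept `γ`: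
`Y (t+1) = γ + α * Y t + ε (t+1)` if `Y t > r`, and `Y (t+1) = γ + β * Y t + ε (t+1)` if
`Y t ≤ r`, where `{ε t : t ≥ 1}` is i.i.d. with mean zero and variance `σ² ∈ (0, ∞)` and
`Y 0` is independent of the innovations. -/
structure IsTAR1Intercept {Ω : Type*} [MeasurableSpace Ω] (μ : Measure Ω)
    (γ α β r σ : ℝ) (ε : ℕ → Ω → ℝ) (Y : ℕ → Ω → ℝ) : Prop where
  isProb : IsProbabilityMeasure μ
  meas_eps : ∀ t, Measurable (ε t)
  meas_Y0 : Measurable (Y 0)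
  ident : ∀ s t, IdentDistrib (ε s) (ε t) μ μ
  indep : iIndepFun ε μ
  indep_Y0 : IndepFun (Y 0) (fun ω t => ε t ω) μ
  integrable : Integrable (ε 1) μ
  mean_zero : ∫ ω, ε 1 ω ∂μ = 0
  sq_int : MemLp (ε 1) 2 μ
  variance_eq : variance (ε 1) μ = σ ^ 2
  sigma_pos : 0 < σ
  recursion : ∀ t ω, Y (t + 1) ω =
    γ + (if r < Y t ω then α * Y t ω else β * Y t ω) + ε (t + 1) ω

open Finset

theorem ae_tendsto_sum_Icc_div_atTop {Ω : Type*} [MeasurableSpace Ω] {μ : Measure Ω}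
    {X : ℕ → Ω → ℝ} (hint : Integrable (X 1) μ) (hindep : iIndepFun X μ)
    (hident : ∀ i, IdentDistrib (X i) (X 1) μ μ) :
    ∀ᵐ ω ∂μ, Tendsto (fun n : ℕ => (∑ k ∈ Icc 1 n, X k ω) / n) atTop (𝓝 μ[X 1]) := by
  have hsum : ∀ ω n, ∑ k ∈ Icc 1 n, X k ω = ∑ i ∈ range n, X (i + 1) ω := fun ω n => by
    rw [range_eq_Ico, sum_Ico_add' (X · ω) 0 n 1]; rfl
  simpa only [hsum] using strong_law_ae_real (fun i => X (i + 1)) hint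
    (fun i j hij => hindep.indepFun (by simpa using hij)) (fun i => hident (i + 1))

theorem tendsto_atTop_of_linear_drift_le {γ c : ℝ} {s y : ℕ → ℝ} (hγ : 0 < γ)
    (hs : Tendsto (fun n : ℕ => s n / n) atTop (𝓝 0)) (hy : ∀ n, n * γ + s n + c ≤ y n) :
    Tendsto y atTop atTop := by
  have hlin : Tendsto (fun n : ℕ => (n : ℝ) * (γ + s n / n) + c) atTop atTop :=
    tendsto_atTop_add_const_right _ c <| tendsto_natCast_atTop_atTop.atTop_mul_pos
      (by simpa using hγ) (tendsto_const_nhds.add hs)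
  refine tendsto_atTop_mono' _ ?_ hlin
  filter_upwards [eventually_ge_atTop 1] with n hn
  have hn' : (n : ℝ) ≠ 0 := by positivity
  rw [mul_add, mul_div_cancel₀ _ hn']
  exact hy n

theorem exists_forall_abs_le_of_eventually_eq {f : ℕ → ℝ} {c : ℝ} (h : ∀ᶠ n in atTop, f n = c) :
    ∃ M, ∀ n, |f n| ≤ M := by
  obtain ⟨M, hM⟩ := isBounded_iff_forall_norm_le.1 <|
    Metric.isBounded_range_of_tendsto f (tendsto_const_nhds.congr' (h.mono fun _ => Eq.symm))
  exact ⟨M, fun n => hM _ ⟨n, rfl⟩⟩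

section Deviation

variable {γ : ℝ} {e y : ℕ → ℝ}

def driftDeviation (γ : ℝ) (e y : ℕ → ℝ) (n : ℕ) : ℝ :=
  y n - n * γ - ∑ k ∈ Icc 1 n, e k

@[simp]
theorem driftDeviation_zero : driftDeviation γ e y 0 = y 0 := by
  simp [driftDeviation]

theorem driftDeviation_succ (n : ℕ) :
    driftDeviation γ e y (n + 1) = driftDeviation γ e y n + (y (n + 1) - (γ + y n + e (n + 1))) := by
  simp only [driftDeviation, sum_Icc_succ_top (Nat.le_add_left 1 n)]
  push_cast
  ring

theorem monotone_driftDeviation (h : ∀ n, γ + y n + e (n + 1) ≤ y (n + 1)) :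
    Monotone (driftDeviation γ e y) :=
  monotone_nat_of_le_succ fun n => by
    rw [driftDeviation_succ]
    linarith [h n]

theorem driftDeviation_eventually_eq (h : ∀ᶠ n in atTop, y (n + 1) = γ + y n + e (n + 1)) :
    ∃ c, ∀ᶠ n in atTop, driftDeviation γ e y n = c := by
  obtain ⟨N, hN⟩ := eventually_atTop.1 h
  refine ⟨driftDeviation γ e y N, eventually_atTop.2 ⟨N, fun n hn => ?_⟩⟩
  induction n, hn using Nat.le_induction with
  | base => rfl
  | succ n hn ih => rw [driftDeviation_succ, hN n hn, sub_self, add_zero, ih]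

end Deviation

namespace IsTAR1Intercept

variable {Ω : Type*} [MeasurableSpace Ω] {μ : Measure Ω} {γ α β r σ : ℝ} {ε Y : ℕ → Ω → ℝ}

theorem le_succ_of_unit_root (hTAR : IsTAR1Intercept μ γ α β r σ ε Y) (hα : α = 1) (hβ : β ≤ 1)
    (hr : r ≤ 0) (t : ℕ) (ω : Ω) : γ + Y t ω + ε (t + 1) ω ≤ Y (t + 1) ω := by
  rw [hTAR.recursion, hα, one_mul]
  split_ifs with hY
  · rfl
  · have : (1 - β) * Y t ω ≤ 0 :=
      mul_nonpos_of_nonneg_of_nonpos (sub_nonneg.2 hβ) ((not_lt.1 hY).trans hr)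
    linarith

theorem succ_eq_of_lt (hTAR : IsTAR1Intercept μ γ α β r σ ε Y) (hα : α = 1) {t : ℕ} {ω : Ω}
    (hY : r < Y t ω) : Y (t + 1) ω = γ + Y t ω + ε (t + 1) ω := by
  rw [hTAR.recursion, if_pos hY, hα, one_mul]

theorem ae_tendsto_sum_innovations_div (hTAR : IsTAR1Intercept μ γ α β r σ ε Y) :
    ∀ᵐ ω ∂μ, Tendsto (fun n : ℕ => (∑ k ∈ Icc 1 n, ε k ω) / n) atTop (𝓝 0) := by
  simpa only [hTAR.mean_zero] using ae_tendsto_sum_Icc_div_atTop hTAR.integrable hTAR.indep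
    fun i => hTAR.ident i 1

end IsTAR1Intercept

/-- Remark 2.2: if `α = 1`, `β < 1`, `r ≤ 0` and `γ > 0`, then
`Y_n ≥ nγ + Σ_{k=1}^n ε_k + Y₀` for all `n ≥ 1`; consequently `Y_n → ∞` a.s. and
`max_{1≤k≤n} |Y_k - kγ - Σ_{i=1}^k ε_i| = O(1)` a.s. -/
theorem tar1_intercept_drift
    {Ω : Type*} [MeasurableSpace Ω] {μ : Measure Ω} {γ α β r σ : ℝ} {ε Y : ℕ → Ω → ℝ}
    (hTAR : IsTAR1Intercept μ γ α β r σ ε Y)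
    (hα : α = 1) (hβ : β < 1) (hr : r ≤ 0) (hγ : 0 < γ) :
    (∀ ω, ∀ n : ℕ, 1 ≤ n →
      (n : ℝ) * γ + (∑ k ∈ Finset.Icc 1 n, ε k ω) + Y 0 ω ≤ Y n ω) ∧
    (∀ᵐ ω ∂μ, Tendsto (fun n => Y n ω) atTop atTop) ∧
    (∀ᵐ ω ∂μ, ∃ M : ℝ, ∀ n : ℕ, 1 ≤ n →
      |Y n ω - (n : ℝ) * γ - ∑ i ∈ Finset.Icc 1 n, ε i ω| ≤ M) := by
  have lower : ∀ ω (n : ℕ), (n : ℝ) * γ + (∑ k ∈ Icc 1 n, ε k ω) + Y 0 ω ≤ Y n ω := by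
    intro ω n
    have := monotone_driftDeviation (e := (ε · ω)) (y := (Y · ω))
      (hTAR.le_succ_of_unit_root hα hβ.le hr · ω) (Nat.zero_le n)
    rw [driftDeviation_zero, driftDeviation] at this
    linarith
  have diverge : ∀ᵐ ω ∂μ, Tendsto (fun n => Y n ω) atTop atTop := by
    filter_upwards [hTAR.ae_tendsto_sum_innovations_div] with ω hω
    exact tendsto_atTop_of_linear_drift_le hγ hω (lower ω)
  refine ⟨fun ω n _ => lower ω n, diverge, ?_⟩
  filter_upwards [diverge] with ω hω
  obtain ⟨c, hc⟩ := driftDeviation_eventually_eq (γ := γ) (e := (ε · ω)) (y := (Y · ω)) <|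
    (hω.eventually_gt_atTop r).mono fun _ => hTAR.succ_eq_of_lt hα
  obtain ⟨M, hM⟩ := exists_forall_abs_le_of_eventually_eq hc
  exact ⟨M, fun n _ => hM n⟩

end
end

section
/- Assume the TAR(1) model with zero intercepts, E Y₀² < ∞, α = 1, β < 1 and r ≤ 0. Let {Y*_t} be the process driven by the same innovations and the same initial value, Y*₀ = Y₀, but with lower-regime slope −1: Y*_t = Y*_{t−1} + ε_t if Y*_{t−1} > r and Y*_t = −Y*_{t−1} + ε_t if Y*_{t−1} ≤ r. Then (1/n) · E[ max_{1≤k≤n} |Y_k − Y*_k|² ] → 0 as n → ∞. -/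
open MeasureTheory ProbabilityTheory Filter
open scoped Topology NNReal ENNReal

noncomputable section

/-!
Since both processes are driven by the same innovations, only the regime maps change their
difference `D`. Put `M_n = |Y₀| + |r| + max_{j ≤ n} |ε_j|`. Both processes stay above `-C M_n`
for a constant `C`: the upper regime only moves a value above `r ≥ -|r|` by one innovation, and
the lower regime contracts by `max β 0 < 1`. When the two processes are in different regimes,
`D_n` has a definite sign, and then `|D_{n+1}| ≤ max |D_n| ((2 + |β|) C M_n)`. So
`max_{k ≤ n} D_k²` is bounded by a constant times `Y₀² + r² + max_{j ≤ n} ε_j²`. Finally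
`E[max_{j ≤ n} ε_j²] = o(n)`, because `max_{j ≤ n} ε_j² ≤ m + Σ_{j ≤ n} (ε_j² - m)⁺` and
`E (ε_1² - m)⁺ → 0` as `m → ∞`.
-/

def tarStep (α β r x : ℝ) : ℝ := if r < x then α * x else β * x

section Pathwise

variable {β r C L : ℝ}

lemma neg_max_le_tarStep (hr : r ≤ 0) {a : ℝ} (ha : -L ≤ a) :
    -max |r| (max β 0 * L) ≤ tarStep 1 β r a := by
  have hr' : -max |r| (max β 0 * L) ≤ r :=
    (neg_le_neg (le_max_left _ _)).trans (neg_abs_le r)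
  unfold tarStep
  split_ifs with h
  · linarith
  · have hβa : -(max β 0 * L) ≤ β * a := by
      rcases le_total β 0 with hβ | hβ
      · rw [max_eq_right hβ]; nlinarith
      · rw [max_eq_left hβ]; nlinarith
    linarith [le_max_right |r| (max β 0 * L)]

lemma abs_tarStep_sub_tarStep_le (hr : r ≤ 0) (hβ : β ≤ 1) (hL : |r| ≤ L) {a b : ℝ}
    (ha : -L ≤ a) (hb : -L ≤ b) :
    |tarStep 1 β r a - tarStep 1 (-1) r b| ≤ max |a - b| ((2 + |β|) * L) := by
  have hL0 : 0 ≤ L := (abs_nonneg r).trans hL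
  have hβL : 0 ≤ |β| * L := mul_nonneg (abs_nonneg β) hL0
  have hmax₁ := le_max_left |a - b| ((2 + |β|) * L)
  have hmax₂ := le_max_right |a - b| ((2 + |β|) * L)
  have hab := abs_le.mp (le_refl |a - b|)
  unfold tarStep
  split_ifs with h₁ h₂ h₂ <;> simp only [one_mul, neg_one_mul] <;> rw [abs_le]
  · exact ⟨by linarith, by linarith⟩
  · exact ⟨by linarith, by linarith⟩
  · have hβa : |β * a| ≤ |β| * L := by
      rw [abs_mul]; exact mul_le_mul_of_nonneg_left (abs_le.mpr ⟨ha, by linarith⟩) (abs_nonneg β)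
    have hβa' : 0 ≤ (1 - β) * -a := mul_nonneg (by linarith) (by linarith)
    constructor <;> nlinarith [abs_le.mp hβa]
  · have hβa : |β * a| ≤ |β| * L := by
      rw [abs_mul]; exact mul_le_mul_of_nonneg_left (abs_le.mpr ⟨ha, by linarith⟩) (abs_nonneg β)
    constructor <;> linarith [abs_le.mp hβa]

variable {e y z M : ℕ → ℝ}

lemma neg_mul_le_of_tarStep (hr : r ≤ 0) (hC : 2 ≤ C) (hβC : 1 ≤ (1 - β) * C)
    (hM : Monotone M) (hrM : |r| ≤ M 0) (hyM : |y 0| ≤ M 0) (heM : ∀ t, |e t| ≤ M t)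
    (hy : ∀ t, y (t + 1) = tarStep 1 β r (y t) + e (t + 1)) (n : ℕ) :
    -(C * M n) ≤ y n := by
  have hM0 : ∀ n, 0 ≤ M n := fun n => (abs_nonneg r).trans (hrM.trans (hM (Nat.zero_le n)))
  have hbC : max β 0 * C + 1 ≤ C := by
    rcases le_total β 0 with hβ | hβ
    · rw [max_eq_right hβ]; linarith
    · rw [max_eq_left hβ]; linarith
  induction n with
  | zero => nlinarith [neg_abs_le (y 0), hM0 0]
  | succ n ih =>
    have hMn : M n ≤ M (n + 1) := hM n.le_succ
    have hrM' : |r| ≤ M (n + 1) := hrM.trans (hM (Nat.zero_le _))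
    have hbM : max β 0 * (C * M n) ≤ max β 0 * C * M (n + 1) := by
      rw [← mul_assoc]
      exact mul_le_mul_of_nonneg_left hMn (by positivity)
    have hmax : max |r| (max β 0 * (C * M n)) + |e (n + 1)| ≤ C * M (n + 1) := by
      rw [← max_add_add_right]
      refine max_le ?_ ?_ <;> nlinarith [heM (n + 1), hM0 (n + 1)]
    rw [hy n]
    linarith [neg_abs_le (e (n + 1)), neg_max_le_tarStep (β := β) hr ih]

lemma abs_sub_le_of_tarStep (hr : r ≤ 0) (hβ : β ≤ 1) (hM : Monotone M) (hrM : |r| ≤ M 0)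
    (hyM : ∀ n, -M n ≤ y n) (hzM : ∀ n, -M n ≤ z n) (h0 : y 0 = z 0)
    (hy : ∀ t, y (t + 1) = tarStep 1 β r (y t) + e (t + 1))
    (hz : ∀ t, z (t + 1) = tarStep 1 (-1) r (z t) + e (t + 1)) (n : ℕ) :
    |y n - z n| ≤ (2 + |β|) * M n := by
  induction n with
  | zero =>
    rw [h0, sub_self, abs_zero]
    exact mul_nonneg (by positivity) ((abs_nonneg r).trans hrM)
  | succ n ih =>
    have hrM' : |r| ≤ M n := hrM.trans (hM (Nat.zero_le n))
    have hMn : (2 + |β|) * M n ≤ (2 + |β|) * M (n + 1) :=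
      mul_le_mul_of_nonneg_left (hM n.le_succ) (by positivity)
    calc |y (n + 1) - z (n + 1)| = |tarStep 1 β r (y n) - tarStep 1 (-1) r (z n)| := by
          rw [hy, hz, add_sub_add_right_eq_sub]
      _ ≤ max |y n - z n| ((2 + |β|) * M n) :=
          abs_tarStep_sub_tarStep_le hr hβ hrM' (hyM n) (hzM n)
      _ ≤ (2 + |β|) * M (n + 1) := max_le (ih.trans hMn) hMn

lemma sq_abs_add_abs_add_partialSups_le (a b : ℝ) (e : ℕ → ℝ) (n : ℕ) :
    (|a| + |b| + partialSups (fun j => |e j|) n) ^ 2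
      ≤ 3 * (a ^ 2 + b ^ 2 + partialSups (fun j => e j ^ 2) n) := by
  obtain ⟨j, hj, hP⟩ := exists_partialSups_eq (fun j => |e j|) n
  have hej : e j ^ 2 ≤ partialSups (fun j => e j ^ 2) n :=
    le_partialSups_of_le (fun j => e j ^ 2) hj
  rw [hP]
  nlinarith [sq_abs a, sq_abs b, sq_abs (e j), sq_nonneg (|a| - |b|), sq_nonneg (|a| - |e j|),
    sq_nonneg (|b| - |e j|)]

lemma iSup_sq_sub_le_of_tarStep (hr : r ≤ 0) (hC : 2 ≤ C) (hβC : 1 ≤ (1 - β) * C)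
    (h0 : y 0 = z 0) (hy : ∀ t, y (t + 1) = tarStep 1 β r (y t) + e (t + 1))
    (hz : ∀ t, z (t + 1) = tarStep 1 (-1) r (z t) + e (t + 1)) (n : ℕ) :
    ⨆ k ∈ Finset.Icc 1 n, (y k - z k) ^ 2
      ≤ 3 * ((2 + |β|) * C) ^ 2 * (y 0 ^ 2 + r ^ 2 + partialSups (fun j => e j ^ 2) n) := by
  set M : ℕ → ℝ := fun n => |y 0| + |r| + partialSups (fun j => |e j|) n with hM_def
  have hP : ∀ n, 0 ≤ partialSups (fun j => |e j|) n :=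
    fun n => (abs_nonneg (e 0)).trans (le_partialSups_of_le (fun j => |e j|) (Nat.zero_le n))
  have hM : Monotone M := fun m n hmn => by
    simp only [hM_def]
    gcongr
  have hrM : |r| ≤ M 0 := by simp only [hM_def]; linarith [abs_nonneg (y 0), hP 0]
  have hyM : |y 0| ≤ M 0 := by simp only [hM_def]; linarith [abs_nonneg r, hP 0]
  have heM : ∀ t, |e t| ≤ M t := fun t => by
    simp only [hM_def]
    linarith [abs_nonneg (y 0), abs_nonneg r, le_partialSups (fun j => |e j|) t]
  have hC0 : 0 ≤ C := by linarith
  have hβ : β ≤ 1 := by nlinarith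
  have hdiff := abs_sub_le_of_tarStep hr hβ (hM.const_mul hC0) (by nlinarith [abs_nonneg r])
    (neg_mul_le_of_tarStep hr hC hβC hM hrM hyM heM hy)
    (neg_mul_le_of_tarStep hr hC (by linarith) hM hrM (h0 ▸ hyM) heM hz) h0 hy hz
  have hbound :
      0 ≤ 3 * ((2 + |β|) * C) ^ 2 * (y 0 ^ 2 + r ^ 2 + partialSups (fun j => e j ^ 2) n) := by
    have := le_partialSups_of_le (fun j => e j ^ 2) (Nat.zero_le n)
    exact mul_nonneg (by positivity) (by nlinarith [sq_nonneg (e 0), sq_nonneg (y 0)])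
  refine Real.iSup_le (fun k => Real.iSup_le (fun hk => ?_) hbound) hbound
  have hMk : M k ≤ M n := hM (Finset.mem_Icc.mp hk).2
  calc (y k - z k) ^ 2 = |y k - z k| ^ 2 := (sq_abs _).symm
    _ ≤ ((2 + |β|) * C) ^ 2 * M n ^ 2 := by
      rw [← mul_pow]
      gcongr
      calc |y k - z k| ≤ (2 + |β|) * (C * M k) := hdiff k
        _ ≤ (2 + |β|) * C * M n := by rw [← mul_assoc]; gcongr
    _ ≤ ((2 + |β|) * C) ^ 2 * (3 * (y 0 ^ 2 + r ^ 2 + partialSups (fun j => e j ^ 2) n)) := by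
      gcongr
      exact sq_abs_add_abs_add_partialSups_le (y 0) r e n
    _ = _ := by ring

end Pathwise

lemma partialSups_le_add_sum_posPart (f : ℕ → ℝ) (a : ℝ) (n : ℕ) :
    partialSups f n ≤ a + ∑ j ∈ Finset.range (n + 1), (f j - a)⁺ :=
  partialSups_le f n _ fun j hj => by
    have hsum : (f j - a)⁺ ≤ ∑ i ∈ Finset.range (n + 1), (f i - a)⁺ :=
      Finset.single_le_sum (f := fun i => (f i - a)⁺) (fun i _ => posPart_nonneg _)
        (Finset.mem_range.mpr (Nat.lt_succ_of_le hj))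
    linarith [le_posPart (f j - a)]

lemma tendsto_div_natCast_of_le_add_mul {u A a : ℕ → ℝ}
    (ha : Tendsto a atTop (𝓝 0)) (hu : ∀ n, 0 ≤ u n)
    (hle : ∀ m n, u n ≤ A m + (n + 1) * a m) :
    Tendsto (fun n => u n / n) atTop (𝓝 0) := by
  refine Asymptotics.IsLittleO.tendsto_div_nhds_zero <|
    Asymptotics.isLittleO_iff.mpr fun c hc => ?_
  obtain ⟨m, hm⟩ := (ha.eventually_lt_const (by positivity : 0 < c / 4)).exists
  filter_upwards [(tendsto_natCast_atTop_atTop (R := ℝ)).eventually_ge_atTop (2 * A m / c),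
    eventually_ge_atTop 1] with n hAn hn
  have hn' : (1 : ℝ) ≤ n := by exact_mod_cast hn
  rw [Real.norm_of_nonneg (hu n), Real.norm_natCast]
  have hA : A m ≤ c / 2 * n := by rw [div_le_iff₀' hc] at hAn; linarith
  nlinarith [hle m n]

section Integral

variable {Ω : Type*} [MeasurableSpace Ω] {μ : Measure Ω}

lemma tendsto_integral_posPart_sub_natCast {f : Ω → ℝ} (hf : Integrable f μ) :
    Tendsto (fun m : ℕ => ∫ ω, (f ω - m)⁺ ∂μ) atTop (𝓝 0) := by
  have hlim : ∀ ω, Tendsto (fun m : ℕ => (f ω - m)⁺) atTop (𝓝 0) := fun ω =>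
    tendsto_const_nhds.congr' <| by
      filter_upwards [(tendsto_natCast_atTop_atTop (R := ℝ)).eventually_ge_atTop (f ω)] with m hm
      exact (posPart_eq_zero.mpr (sub_nonpos.mpr hm)).symm
  simpa using tendsto_integral_of_dominated_convergence
    (F := fun (m : ℕ) ω => (f ω - m)⁺) (fun ω => |f ω|)
    (fun m => (hf.aestronglyMeasurable.sub aestronglyMeasurable_const).sup
      aestronglyMeasurable_const) hf.abs
    (fun m => ae_of_all _ fun ω => by
      rw [Real.norm_of_nonneg (posPart_nonneg _), posPart_def]
      exact max_le (by linarith [le_abs_self (f ω), m.cast_nonneg (α := ℝ)]) (abs_nonneg _))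
    (ae_of_all _ hlim)

lemma integrable_partialSups {f : ℕ → Ω → ℝ} (hf : ∀ j, Integrable (f j) μ) (n : ℕ) :
    Integrable (fun ω => partialSups (fun j => f j ω) n) μ := by
  rw [show (fun ω => partialSups (fun j => f j ω) n) = partialSups f n from
    funext fun ω => (Pi.partialSups_apply f n ω).symm]
  induction n with
  | zero => rw [partialSups_zero]; exact hf 0
  | succ n ih => rw [partialSups_add_one]; exact ih.sup (hf (n + 1))

lemma tendsto_integral_partialSups_div [IsFiniteMeasure μ] {Z : ℕ → Ω → ℝ}
    (hZ0 : ∀ j ω, 0 ≤ Z j ω) (hZ : ∀ j, IdentDistrib (Z j) (Z 0) μ μ)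
    (hZi : Integrable (Z 0) μ) :
    Tendsto (fun n : ℕ => (∫ ω, partialSups (fun j => Z j ω) n ∂μ) / n) atTop (𝓝 0) := by
  have hpos : ∀ j (m : ℕ), Integrable (fun ω => (Z j ω - m)⁺) μ := fun j m =>
    (((hZ j).integrable_iff.mpr hZi).sub (integrable_const _)).pos_part
  have hident : ∀ j (m : ℕ), ∫ ω, (Z j ω - m)⁺ ∂μ = ∫ ω, (Z 0 ω - m)⁺ ∂μ := fun j m =>
    ((hZ j).comp (u := fun x : ℝ => (x - m)⁺) (by fun_prop)).integral_eq
  have hnonneg : ∀ n ω, 0 ≤ partialSups (fun j => Z j ω) n := fun n ω =>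
    (hZ0 0 ω).trans (le_partialSups_of_le (fun j => Z j ω) (Nat.zero_le n))
  refine tendsto_div_natCast_of_le_add_mul (A := fun m => μ.real Set.univ * m)
    (tendsto_integral_posPart_sub_natCast hZi) (fun n => integral_nonneg (hnonneg n))
    (fun m n => ?_)
  calc ∫ ω, partialSups (fun j => Z j ω) n ∂μ
      ≤ ∫ ω, (m + ∑ j ∈ Finset.range (n + 1), (Z j ω - m)⁺) ∂μ :=
        integral_mono_of_nonneg (ae_of_all _ (hnonneg n))
          ((integrable_const _).add (integrable_finsetSum _ fun j _ => hpos j m))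
          (ae_of_all _ fun ω => partialSups_le_add_sum_posPart _ _ n)
    _ = μ.real Set.univ * m + (n + 1) * ∫ ω, (Z 0 ω - m)⁺ ∂μ := by
        rw [integral_add (integrable_const _) (integrable_finsetSum _ fun j _ => hpos j m),
          integral_finsetSum _ fun j _ => hpos j m, Finset.sum_congr rfl fun j _ => hident j m]
        simp

lemma tendsto_integral_div_of_le_mul_add {F S : ℕ → Ω → ℝ} {W : Ω → ℝ} {K : ℝ}
    (hF : ∀ n ω, 0 ≤ F n ω) (hle : ∀ n ω, F n ω ≤ K * (W ω + S n ω)) (hW : Integrable W μ)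
    (hS : ∀ n, Integrable (S n) μ)
    (hlim : Tendsto (fun n : ℕ => (∫ ω, S n ω ∂μ) / n) atTop (𝓝 0)) :
    Tendsto (fun n : ℕ => (∫ ω, F n ω ∂μ) / n) atTop (𝓝 0) := by
  have hbound : ∀ n, ∫ ω, F n ω ∂μ ≤ K * ((∫ ω, W ω ∂μ) + ∫ ω, S n ω ∂μ) := fun n => by
    rw [← integral_add hW (hS n), ← integral_const_mul]
    exact integral_mono_of_nonneg (ae_of_all _ (hF n)) ((hW.add (hS n)).const_mul _)
      (ae_of_all _ (hle n))
  refine squeeze_zero (fun n => div_nonneg (integral_nonneg (hF n)) n.cast_nonneg)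
    (fun n => div_le_div_of_nonneg_right (hbound n) n.cast_nonneg) ?_
  simpa [mul_add, add_div, mul_div_assoc] using
    ((tendsto_const_div_atTop_nhds_zero_nat _).add hlim).const_mul K

end Integral

/-- Step in the proof of Theorem 3.1: if `α = 1`, `β < 1`, `r ≤ 0`, and `Y*` is the TAR(1)
process with the same innovations and initial value but lower-regime slope `-1`, then
`E[max_{1≤k≤n} |Y_k - Y*_k|²] / n → 0`. -/
theorem tar1_comparison_process
    {Ω : Type*} [MeasurableSpace Ω] {μ : Measure Ω} {α β r σ : ℝ} {ε Y : ℕ → Ω → ℝ}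
    (hTAR : IsTAR1 μ α β r σ ε Y) (hY0 : MemLp (Y 0) 2 μ)
    (hα : α = 1) (hβ : β < 1) (hr : r ≤ 0)
    (Ystar : ℕ → Ω → ℝ)
    (hstar0 : ∀ ω, Ystar 0 ω = Y 0 ω)
    (hstar : ∀ t ω, Ystar (t + 1) ω =
      (if r < Ystar t ω then Ystar t ω else -Ystar t ω) + ε (t + 1) ω) :
    Tendsto (fun n : ℕ =>
        (∫ ω, (⨆ k ∈ Finset.Icc 1 n, (Y k ω - Ystar k ω) ^ 2) ∂μ) / n)
      atTop (𝓝 0) := by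
  subst hα
  have := hTAR.isProb
  obtain ⟨C, hC, hβC⟩ : ∃ C : ℝ, 2 ≤ C ∧ 1 ≤ (1 - β) * C :=
    ⟨max 2 (1 - β)⁻¹, le_max_left _ _, (mul_inv_cancel₀ (sub_pos.mpr hβ).ne').symm.le.trans
      (mul_le_mul_of_nonneg_left (le_max_right _ _) (sub_pos.mpr hβ).le)⟩
  have hε : ∀ j, MemLp (ε j) 2 μ := fun j => (hTAR.ident 1 j).memLp_snd hTAR.sq_int
  -- the envelope `partialSups` also runs over `ε 0`, which `IsTAR1` makes identically
  -- distributed with the innovations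
  refine tendsto_integral_div_of_le_mul_add
    (fun n ω => Real.iSup_nonneg fun k => Real.iSup_nonneg fun _ => sq_nonneg _)
    (fun n ω => iSup_sq_sub_le_of_tarStep (y := fun t => Y t ω) (z := fun t => Ystar t ω)
      (e := fun t => ε t ω) hr hC hβC (hstar0 ω).symm (fun t => hTAR.recursion t ω)
      (fun t => by simp [tarStep, hstar]) n)
    (hY0.integrable_sq.add (integrable_const _))
    (integrable_partialSups fun j => (hε j).integrable_sq)
    (tendsto_integral_partialSups_div (fun j ω => sq_nonneg (ε j ω))
      (fun j => (hTAR.ident j 0).comp (measurable_id.pow_const 2)) (hε 0).integrable_sq)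

end
end
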